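/- Let b, σ ∈ ℝ. There exists a constant C > 0, depending only on b and σ, such that the following holds. Let ρ : ℝ → ℝ be three times continuously differentiable with |ρ''(t)| ≤ M and |ρ'''(t)| ≤ M for all t ∈ ℝ, let γ ≥ 1, and let U : ℝ → ℝ be a one-hidden-layer neural network U(x) = Σ_{i=1}^m c_i ρ(a_i·x + b_i) + b_0 whose weights satisfy the constraint max_{i=1,…,m} |a_i| ≤ γ and Σ_{i=1}^m |c_i| ≤ γ. Then for every x ∈ ℝ and every h ∈ (0, 1], |(1/h)·∫ U(x + b·h + σ·w) · w dγ_h(w) − σ·U'(x)| ≤ C·M·(γ³ + γ⁴)·h, where γ_h is the Gaussian measure on ℝ with mean 0 and variance h. -/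

import Mathlib

/-!
Rescale `w = √h z` with `z` standard normal and expand `U` to second order at `x` with Lagrange
remainder. Since `E z = E z³ = 0` and `E z² = 1`, the Taylor polynomial contributes exactly
`σ U'(x) + b σ U''(x) h` to the Gaussian difference quotient, while the remainder, at most
`sup |U'''| |b h + σ √h z|³ / 6 ≤ sup |U'''| (|b| + |σ|)³ h^(3/2) (1 + |z|)³ / 6` for `h ≤ 1`,
contributes `O(h)`. For the network, `U⁽ⁿ⁾(x) = ∑ cᵢ aᵢⁿ ρ⁽ⁿ⁾(aᵢ x + βᵢ)`, so the weight
constraints give `|U''| ≤ γ³ M` and `|U'''| ≤ γ⁴ M`.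
-/

open MeasureTheory ProbabilityTheory
open scoped NNReal

section Gaussian

variable {μ : ℝ} {v : ℝ≥0}

lemma integrable_one_add_abs_pow_gaussianReal (n : ℕ) :
    Integrable (fun z => (1 + |z|) ^ n) (gaussianReal μ v) := by
  have hLp : MemLp (fun z : ℝ => 1 + |z|) n (gaussianReal μ v) :=
    (memLp_const (1 : ℝ)).add (memLp_id_gaussianReal' n (by simp)).norm
  refine hLp.integrable_norm_pow'.congr (.of_forall fun z => ?_)
  simp only [Real.norm_eq_abs, abs_of_nonneg (by positivity : (0 : ℝ) ≤ 1 + |z|)]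

lemma integrable_gaussianReal_of_polynomial_growth {F : ℝ → ℝ} (hF : Continuous F) {C : ℝ} (n : ℕ)
    (hC : ∀ z, |F z| ≤ C * (1 + |z|) ^ n) : Integrable F (gaussianReal μ v) :=
  ((integrable_one_add_abs_pow_gaussianReal n).const_mul C).mono' hF.aestronglyMeasurable
    (.of_forall hC)

lemma integrable_pow_gaussianReal (n : ℕ) : Integrable (fun z => z ^ n) (gaussianReal μ v) :=
  integrable_gaussianReal_of_polynomial_growth (by fun_prop) (C := 1) n fun z => by
    rw [abs_pow, one_mul]
    exact pow_le_pow_left₀ (abs_nonneg z) (by linarith) n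

lemma integral_comp_neg_gaussianReal {E : Type*} [NormedAddCommGroup E] [NormedSpace ℝ E]
    (F : ℝ → E) : ∫ z, F (-z) ∂gaussianReal 0 v = ∫ z, F z ∂gaussianReal 0 v := by
  rw [← measurableEmbedding_neg.integral_map, gaussianReal_map_neg, neg_zero]

lemma integral_sq_gaussianReal : ∫ z, z ^ 2 ∂gaussianReal 0 v = v := by
  rw [← variance_of_integral_eq_zero measurable_id'.aemeasurable (by simp)]
  exact variance_fun_id_gaussianReal

lemma integral_pow_three_gaussianReal : ∫ z, z ^ 3 ∂gaussianReal 0 v = 0 := by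
  have h := integral_comp_neg_gaussianReal (v := v) fun z => z ^ 3
  simp only [Odd.neg_pow (by decide : Odd 3), integral_neg] at h
  linarith

lemma integrable_cubic_gaussianReal (a₀ a₁ a₂ a₃ : ℝ) :
    Integrable (fun z => a₀ + a₁ * z + a₂ * z ^ 2 + a₃ * z ^ 3) (gaussianReal μ v) := by
  have hp := integrable_pow_gaussianReal (μ := μ) (v := v)
  have h1 : Integrable (fun z => a₁ * z) (gaussianReal μ v) := by simpa using (hp 1).const_mul a₁
  exact (((integrable_const a₀).add h1).add ((hp 2).const_mul a₂)).add ((hp 3).const_mul a₃)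

lemma integral_cubic_gaussianReal (a₀ a₁ a₂ a₃ : ℝ) :
    ∫ z, (a₀ + a₁ * z + a₂ * z ^ 2 + a₃ * z ^ 3) ∂gaussianReal 0 v = a₀ + a₂ * v := by
  have hp := integrable_pow_gaussianReal (μ := 0) (v := v)
  have h1 : Integrable (fun z => a₁ * z) (gaussianReal 0 v) := by simpa using (hp 1).const_mul a₁
  have h01 : Integrable (fun z => a₀ + a₁ * z) (gaussianReal 0 v) := (integrable_const a₀).add h1
  have h012 : Integrable (fun z => a₀ + a₁ * z + a₂ * z ^ 2) (gaussianReal 0 v) :=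
    h01.add ((hp 2).const_mul a₂)
  rw [integral_add h012 ((hp 3).const_mul a₃), integral_add h01 ((hp 2).const_mul a₂),
    integral_add (integrable_const a₀) h1, integral_const_mul, integral_const_mul,
    integral_const_mul, integral_id_gaussianReal, integral_sq_gaussianReal,
    integral_pow_three_gaussianReal]
  simp

lemma integral_gaussianReal_eq_integral_sqrt_mul {E : Type*} [NormedAddCommGroup E]
    [NormedSpace ℝ E] {h : ℝ} (hh : 0 < h) (F : ℝ → E) :
    ∫ w, F w ∂gaussianReal 0 h.toNNReal = ∫ z, F (√h * z) ∂gaussianReal 0 1 := by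
  have hmap : (gaussianReal 0 1).map (√h * ·) = gaussianReal 0 h.toNNReal := by
    rw [gaussianReal_map_const_mul]
    congr 1
    · simp
    · ext; simp [hh.le]
  rw [← hmap, (measurableEmbedding_mulLeft₀ (Real.sqrt_pos.2 hh).ne').integral_map]

end Gaussian

lemma abs_sub_taylor_two_le {f : ℝ → ℝ} (hf : ContDiff ℝ 3 f) {K : ℝ}
    (hK : ∀ t, |iteratedDeriv 3 f t| ≤ K) (x u : ℝ) :
    |f (x + u) - (f x + deriv f x * u + iteratedDeriv 2 f x * u ^ 2 / 2)| ≤ K * |u| ^ 3 / 6 := by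
  rcases eq_or_ne u 0 with rfl | hu
  · simp
  obtain ⟨x', -, hx'⟩ := taylor_mean_remainder_lagrange_iteratedDeriv (n := 2)
    (by simpa using hu : x ≠ x + u) hf.contDiffOn
  have hwithin : ∀ k ≤ 2, iteratedDerivWithin k f (Set.uIcc x (x + u)) x = iteratedDeriv k f x :=
    fun k hk => iteratedDerivWithin_eq_iteratedDeriv (uniqueDiffOn_uIcc (by simpa using hu))
      (hf.contDiffAt.of_le (by exact_mod_cast hk.trans (by norm_num))) Set.left_mem_uIcc
  simp only [taylor_within_apply, Finset.sum_range_succ, Finset.sum_range_zero, smul_eq_mul,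
    hwithin 0 (by norm_num), hwithin 1 (by norm_num), hwithin 2 (by norm_num),
    iteratedDeriv_zero, iteratedDeriv_one, add_sub_cancel_left] at hx'
  norm_num at hx'
  rw [show f (x + u) - _ = iteratedDeriv 3 f x' * u ^ 3 / 6 by linarith, abs_div, abs_mul,
    abs_pow, abs_of_pos (by norm_num : (0 : ℝ) < 6)]
  gcongr
  exact hK x'

lemma abs_add_mul_le_mul_one_add_abs (α β z : ℝ) : |α + β * z| ≤ (|α| + |β|) * (1 + |z|) := by
  calc |α + β * z| ≤ |α| + |β| * |z| := by simpa only [abs_mul] using abs_add_le α (β * z)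
    _ ≤ (|α| + |β|) * (1 + |z|) := by
        nlinarith [mul_nonneg (abs_nonneg α) (abs_nonneg z), abs_nonneg β]

lemma abs_integral_comp_affine_mul_gaussianReal_sub_le {f : ℝ → ℝ} (hf : ContDiff ℝ 3 f) {K : ℝ}
    (hK : ∀ t, |iteratedDeriv 3 f t| ≤ K) (x α β : ℝ) :
    |∫ z, f (x + α + β * z) * z ∂gaussianReal 0 1 - (β * deriv f x + α * β * iteratedDeriv 2 f x)|
      ≤ K * (|α| + |β|) ^ 3 / 6 * ∫ z, (1 + |z|) ^ 4 ∂gaussianReal 0 1 := by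
  set R : ℝ → ℝ := fun z => (f (x + (α + β * z)) - (f x + deriv f x * (α + β * z)
    + iteratedDeriv 2 f x * (α + β * z) ^ 2 / 2)) * z
  have hK0 : 0 ≤ K := (abs_nonneg _).trans (hK 0)
  have hR : ∀ z, |R z| ≤ K * (|α| + |β|) ^ 3 / 6 * (1 + |z|) ^ 4 := fun z => by
    have hz : |z| ≤ 1 + |z| := by simp
    calc |R z| ≤ K * |α + β * z| ^ 3 / 6 * |z| := by
          rw [abs_mul]; gcongr; exact abs_sub_taylor_two_le hf hK x _
      _ ≤ K * ((|α| + |β|) * (1 + |z|)) ^ 3 / 6 * (1 + |z|) := by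
          gcongr; exact abs_add_mul_le_mul_one_add_abs α β z
      _ = _ := by ring
  have hRint : Integrable R (gaussianReal 0 1) :=
    integrable_gaussianReal_of_polynomial_growth (by unfold R; fun_prop) 4 hR
  have hsplit : ∀ z, f (x + α + β * z) * z = (0 + (f x + deriv f x * α
      + iteratedDeriv 2 f x * α ^ 2 / 2) * z + (β * deriv f x + α * β * iteratedDeriv 2 f x) * z ^ 2
      + iteratedDeriv 2 f x * β ^ 2 / 2 * z ^ 3) + R z := fun z => by
    simp only [R, add_assoc]; ring
  simp_rw [hsplit]
  rw [integral_add (integrable_cubic_gaussianReal _ _ _ _) hRint, integral_cubic_gaussianReal]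
  calc _ = |∫ z, R z ∂gaussianReal 0 1| := by simp
    _ ≤ ∫ z, K * (|α| + |β|) ^ 3 / 6 * (1 + |z|) ^ 4 ∂gaussianReal 0 1 :=
        norm_integral_le_of_norm_le ((integrable_one_add_abs_pow_gaussianReal 4).const_mul _)
          (.of_forall fun z => (Real.norm_eq_abs _).trans_le (hR z))
    _ = _ := integral_const_mul _ _

theorem abs_gaussian_smoothed_deriv_sub_le {f : ℝ → ℝ} (hf : ContDiff ℝ 3 f) {K₂ K₃ : ℝ}
    (hK₂ : ∀ t, |iteratedDeriv 2 f t| ≤ K₂) (hK₃ : ∀ t, |iteratedDeriv 3 f t| ≤ K₃)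
    (b σ x : ℝ) {h : ℝ} (hh : 0 < h) (hh1 : h ≤ 1) :
    |(1 / h) * ∫ w, f (x + b * h + σ * w) * w ∂gaussianReal 0 h.toNNReal - σ * deriv f x|
      ≤ (K₂ * |b| * |σ| + K₃ * (|b| + |σ|) ^ 3 / 6 * ∫ z, (1 + |z|) ^ 4 ∂gaussianReal 0 1) * h := by
  set s := √h with hs_def
  have hs : 0 < s := Real.sqrt_pos.2 hh
  have hs1 : s ≤ 1 := Real.sqrt_le_one.2 hh1
  have hsh : h = s ^ 2 := (Real.sq_sqrt hh.le).symm
  have hE := abs_integral_comp_affine_mul_gaussianReal_sub_le hf hK₃ x (b * h) (σ * s)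
  set I := ∫ z, f (x + b * h + σ * s * z) * z ∂gaussianReal 0 1
  set E := I - (σ * s * deriv f x + b * h * (σ * s) * iteratedDeriv 2 f x) with hE_def
  have hK₃0 : 0 ≤ K₃ := (abs_nonneg _).trans (hK₃ 0)
  set κ := ∫ z, (1 + |z|) ^ 4 ∂gaussianReal 0 1
  have hκ : 0 ≤ κ := integral_nonneg fun z => by positivity
  have hαβ : |b * h| + |σ * s| ≤ (|b| + |σ|) * s := by
    rw [abs_mul, abs_mul, abs_of_pos hh, abs_of_pos hs, hsh]
    nlinarith [mul_nonneg (mul_nonneg (abs_nonneg b) hs.le) (sub_nonneg.2 hs1)]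
  have hrewrite : (1 / h) * ∫ w, f (x + b * h + σ * w) * w ∂gaussianReal 0 h.toNNReal
      - σ * deriv f x = b * σ * iteratedDeriv 2 f x * h + E / s := by
    have hI : ∫ z, f (x + b * h + σ * (s * z)) * (s * z) ∂gaussianReal 0 1 = s * I := by
      rw [← integral_const_mul]
      congr 1 with z
      rw [← mul_assoc σ]
      ring
    rw [integral_gaussianReal_eq_integral_sqrt_mul hh, ← hs_def, hI, hE_def, hsh]
    field_simp
    ring
  have hfirst : |b * σ * iteratedDeriv 2 f x * h| ≤ K₂ * |b| * |σ| * h := by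
    calc _ = |iteratedDeriv 2 f x| * (|b| * |σ| * h) := by
          rw [abs_mul, abs_mul, abs_mul, abs_of_pos hh]; ring
      _ ≤ K₂ * (|b| * |σ| * h) := by gcongr; exact hK₂ x
      _ = _ := by ring
  have hsecond : |E / s| ≤ K₃ * (|b| + |σ|) ^ 3 / 6 * κ * h := by
    rw [abs_div, abs_of_pos hs, div_le_iff₀ hs]
    calc |E| ≤ K₃ * (|b * h| + |σ * s|) ^ 3 / 6 * κ := hE
      _ ≤ K₃ * ((|b| + |σ|) * s) ^ 3 / 6 * κ := by gcongr
      _ = _ := by rw [hsh]; ring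
  rw [hrewrite]
  calc _ ≤ _ := abs_add_le _ _
    _ ≤ _ := add_le_add hfirst hsecond
    _ = _ := by ring

section Network

variable {ι : Type*} [Fintype ι] {ρ : ℝ → ℝ}

def shallowNet (ρ : ℝ → ℝ) (a β c : ι → ℝ) (b0 x : ℝ) : ℝ :=
  ∑ i, c i * ρ (a i * x + β i) + b0

lemma iteratedDeriv_comp_mul_add {n : ℕ} (hρ : ContDiff ℝ n ρ) (a β x : ℝ) :
    iteratedDeriv n (fun x => ρ (a * x + β)) x = a ^ n * iteratedDeriv n ρ (a * x + β) := by
  rw [iteratedDeriv_comp_const_mul (f := fun y => ρ (y + β)) (hρ.comp (by fun_prop)),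
    iteratedDeriv_comp_add_const]

lemma contDiff_shallowNet {n : WithTop ℕ∞} (hρ : ContDiff ℝ n ρ) (a β c : ι → ℝ) (b0 : ℝ) :
    ContDiff ℝ n (shallowNet ρ a β c b0) := by
  unfold shallowNet
  fun_prop

lemma iteratedDeriv_shallowNet {n : ℕ} (hn : 0 < n) (hρ : ContDiff ℝ n ρ) (a β c : ι → ℝ)
    (b0 x : ℝ) :
    iteratedDeriv n (shallowNet ρ a β c b0) x
      = ∑ i, c i * a i ^ n * iteratedDeriv n ρ (a i * x + β i) := by
  have hneuron : ∀ i, ContDiff ℝ n (fun x => c i * ρ (a i * x + β i)) := fun i =>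
    contDiff_const.mul (hρ.comp (by fun_prop))
  rw [show shallowNet ρ a β c b0 = fun x => b0 + ∑ i, c i * ρ (a i * x + β i) by
      ext; simp only [shallowNet]; ring,
    iteratedDeriv_const_add hn, iteratedDeriv_fun_sum fun i _ => (hneuron i).contDiffAt]
  simp_rw [iteratedDeriv_const_mul_field, iteratedDeriv_comp_mul_add hρ, mul_assoc]

lemma abs_iteratedDeriv_shallowNet_le {n : ℕ} (hn : 0 < n) (hρ : ContDiff ℝ n ρ) {M : ℝ}
    (hM : ∀ t, |iteratedDeriv n ρ t| ≤ M) {γ : ℝ} {a β c : ι → ℝ} (ha : ∀ i, |a i| ≤ γ)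
    (hc : ∑ i, |c i| ≤ γ) (b0 x : ℝ) :
    |iteratedDeriv n (shallowNet ρ a β c b0) x| ≤ γ ^ (n + 1) * M := by
  have hM0 : 0 ≤ M := (abs_nonneg _).trans (hM 0)
  have hγ : 0 ≤ γ := (Finset.sum_nonneg fun i _ => abs_nonneg (c i)).trans hc
  rw [iteratedDeriv_shallowNet hn hρ]
  calc _ ≤ ∑ i, |c i| * (γ ^ n * M) := by
        refine (Finset.abs_sum_le_sum_abs _ _).trans (Finset.sum_le_sum fun i _ => ?_)
        rw [abs_mul, abs_mul, abs_pow, mul_assoc]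
        exact mul_le_mul_of_nonneg_left (mul_le_mul (pow_le_pow_left₀ (abs_nonneg _) (ha i) n)
          (hM _) (abs_nonneg _) (pow_nonneg hγ n)) (abs_nonneg _)
    _ = (∑ i, |c i|) * (γ ^ n * M) := (Finset.sum_mul _ _ _).symm
    _ ≤ γ * (γ ^ n * M) := by gcongr
    _ = γ ^ (n + 1) * M := by ring

end Network

/-- Automatic-differentiation approximation error for constrained one-hidden-layer
networks: there is a constant `C > 0` depending only on `b` and `σ` such that for
every activation `ρ` of class `C³` with second and third derivatives bounded by `M`,
every `γ ≥ 1`, and every network `U(x) = ∑ i, c i * ρ (a i * x + β i) + b0` with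
weights satisfying `max |a i| ≤ γ` and `∑ |c i| ≤ γ`, one has, for every `x ∈ ℝ`
and `h ∈ (0, 1]`,
`|(1/h) ∫ U(x + b h + σ w) w dγ_h(w) − σ U'(x)| ≤ C M (γ³ + γ⁴) h`,
where `γ_h` is the Gaussian measure on `ℝ` with mean `0` and variance `h`. -/
theorem gaussian_autodiff_network_estimate (b σ : ℝ) :
    ∃ C > (0 : ℝ), ∀ (M : ℝ) (ρ : ℝ → ℝ), ContDiff ℝ 3 ρ →
      (∀ t : ℝ, |iteratedDeriv 2 ρ t| ≤ M) →
      (∀ t : ℝ, |iteratedDeriv 3 ρ t| ≤ M) →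
      ∀ γ : ℝ, 1 ≤ γ →
      ∀ (m : ℕ) (a β c : Fin m → ℝ) (b0 : ℝ),
        (∀ i, |a i| ≤ γ) → (∑ i, |c i| ≤ γ) →
      ∀ U : ℝ → ℝ, U = (fun x => ∑ i, c i * ρ (a i * x + β i) + b0) →
      ∀ (x h : ℝ), 0 < h → h ≤ 1 →
        |(1 / h) * (∫ w, U (x + b * h + σ * w) * w ∂(gaussianReal 0 h.toNNReal))
            - σ * deriv U x|
          ≤ C * M * (γ ^ 3 + γ ^ 4) * h := by
  set κ := ∫ z, (1 + |z|) ^ 4 ∂gaussianReal 0 1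
  have hκ : 0 ≤ κ := integral_nonneg fun z => by positivity
  refine ⟨|b| * |σ| + (|b| + |σ|) ^ 3 / 6 * κ + 1, by positivity, ?_⟩
  intro M ρ hρ hρ₂ hρ₃ γ hγ m a β c b0 ha hc U hU x h hh hh1
  obtain rfl : U = shallowNet ρ a β c b0 := hU
  refine (abs_gaussian_smoothed_deriv_sub_le (contDiff_shallowNet hρ a β c b0)
    (abs_iteratedDeriv_shallowNet_le two_pos (hρ.of_le (by norm_num)) hρ₂ ha hc b0)
    (abs_iteratedDeriv_shallowNet_le three_pos hρ hρ₃ ha hc b0) b σ x hh hh1).trans ?_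
  have hM : 0 ≤ M := (abs_nonneg _).trans (hρ₂ 0)
  have hγ0 : 0 ≤ γ := by linarith
  calc _ = M * h * (|b| * |σ| * γ ^ 3 + (|b| + |σ|) ^ 3 / 6 * κ * γ ^ 4) := by ring
    _ ≤ M * h * ((|b| * |σ| + (|b| + |σ|) ^ 3 / 6 * κ + 1) * (γ ^ 3 + γ ^ 4)) := by
        gcongr
        have hC₁ : 0 ≤ |b| * |σ| := by positivity
        have hC₂ : 0 ≤ (|b| + |σ|) ^ 3 / 6 * κ := by positivity
        nlinarith [mul_nonneg hC₁ (pow_nonneg hγ0 4), mul_nonneg hC₂ (pow_nonneg hγ0 3),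
          pow_nonneg hγ0 3, pow_nonneg hγ0 4]
    _ = _ := by ring
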